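/- Let Φ ∈ R^{N×D} satisfy (d, δ)-RIP with 0 < δ < 1, and let S ⊆ {1,...,D} with |S| = d. Let β > 0, α̂_S a vector of positive reals, and Σ̂ = (β Φ_S^T Φ_S + diag{α̂_S})^{-1}. Then for each j ∈ S, sqrt((1/K) Σ_{j'∈S, j'≠j} Σ̂_{j,j'}^2) ≤ (1/√K) · δ/(β(1-δ)). -/

import Mathlib

/-!
Let `A = β Φ_Sᵀ Φ_S + diag α` and let `u` be the `j`-th row of `Σ̂ = A⁻¹`, so that `A u = e_j`.
The lower RIP bound makes `A` coercive: `β (1 - δ) ‖u‖² ≤ uᵀ A u = u_j ≤ ‖u‖`, whence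
`‖u‖ ≤ 1 / (β (1 - δ))`. For `j' ≠ j` the `j'`-th row of `A u = e_j` reads
`(β + α_{j'}) u_{j'} = -β ((Φ_Sᵀ Φ_S - I) u)_{j'}`, so the off-diagonal part of `u` is dominated by
`(Φ_Sᵀ Φ_S - I) u`. By RIP the quadratic form of the symmetric matrix `Φ_Sᵀ Φ_S - I` is bounded
by `δ`, hence so is its operator norm, and the off-diagonal part has norm at most
`δ ‖u‖ ≤ δ / (β (1 - δ))`.
-/

open Matrix

open RCLike in
theorem ContinuousLinearMap.norm_le_of_abs_re_inner_self_le {𝕜 E : Type*} [RCLike 𝕜]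
    [NormedAddCommGroup E] [InnerProductSpace 𝕜 E] {T : E →L[𝕜] E}
    (hT : (T : E →ₗ[𝕜] E).IsSymmetric) {δ : ℝ} (hδ : 0 ≤ δ)
    (h : ∀ x, |re (inner 𝕜 (T x) x)| ≤ δ * ‖x‖ ^ 2) : ‖T‖ ≤ δ := by
  rw [T.norm_eq_iSup_rayleighQuotient hT]
  refine ciSup_le fun x => ?_
  rw [rayleighQuotient, reApplyInnerSelf_apply, abs_div, abs_sq]
  rcases eq_or_ne x 0 with rfl | hx
  · simpa using hδ
  · exact div_le_of_le_mul₀ (by positivity) hδ (h x)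

namespace Matrix

variable {m ι : Type*} [Fintype m] [Fintype ι]

theorem IsSymm.sum_sq_mulVec_le [DecidableEq ι] {E : Matrix ι ι ℝ} (hE : E.IsSymm)
    {δ : ℝ} (hδ : 0 ≤ δ) (h : ∀ v, |v ⬝ᵥ E *ᵥ v| ≤ δ * ∑ i, v i ^ 2) (v : ι → ℝ) :
    ∑ i, (E *ᵥ v) i ^ 2 ≤ δ ^ 2 * ∑ i, v i ^ 2 := by
  have hnorm : ‖toEuclideanCLM (𝕜 := ℝ) E‖ ≤ δ := by
    refine ContinuousLinearMap.norm_le_of_abs_re_inner_self_le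
      (isSymmetric_toEuclideanLin_iff.mpr (isHermitian_iff_isSymm.mpr hE)) hδ fun x => ?_
    rw [real_inner_comm, RCLike.re_to_real, inner_toEuclideanCLM, EuclideanSpace.real_norm_sq_eq]
    exact h x.ofLp
  have key := (toEuclideanCLM (𝕜 := ℝ) E).le_of_opNorm_le hnorm (WithLp.toLp 2 v)
  have := pow_le_pow_left₀ (norm_nonneg _) key 2
  simpa [mul_pow, EuclideanSpace.real_norm_sq_eq] using this

theorem dotProduct_transpose_mul_self_mulVec (Φ : Matrix m ι ℝ) (v : ι → ℝ) :
    v ⬝ᵥ (Φᵀ * Φ) *ᵥ v = ∑ i, (Φ *ᵥ v) i ^ 2 := by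
  rw [← mulVec_mulVec, dotProduct_mulVec, vecMul_transpose]
  simp only [dotProduct, sq]

theorem abs_dotProduct_transpose_mul_self_sub_one_mulVec_le [DecidableEq ι] {Φ : Matrix m ι ℝ}
    {δ : ℝ} (hΦ : ∀ v : ι → ℝ, (1 - δ) * ∑ i, v i ^ 2 ≤ ∑ i, (Φ *ᵥ v) i ^ 2 ∧
      ∑ i, (Φ *ᵥ v) i ^ 2 ≤ (1 + δ) * ∑ i, v i ^ 2) (v : ι → ℝ) :
    |v ⬝ᵥ (Φᵀ * Φ - 1) *ᵥ v| ≤ δ * ∑ i, v i ^ 2 := by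
  have hv : v ⬝ᵥ v = ∑ i, v i ^ 2 := by simp only [dotProduct, sq]
  rw [sub_mulVec, one_mulVec, dotProduct_sub, dotProduct_transpose_mul_self_mulVec, hv, abs_le]
  constructor <;> linarith [hΦ v]

theorem sum_sq_transpose_mul_self_sub_one_mulVec_le [DecidableEq ι] {Φ : Matrix m ι ℝ} {δ : ℝ}
    (hδ : 0 ≤ δ) (hΦ : ∀ v : ι → ℝ, (1 - δ) * ∑ i, v i ^ 2 ≤ ∑ i, (Φ *ᵥ v) i ^ 2 ∧
      ∑ i, (Φ *ᵥ v) i ^ 2 ≤ (1 + δ) * ∑ i, v i ^ 2) (v : ι → ℝ) :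
    ∑ i, ((Φᵀ * Φ - 1) *ᵥ v) i ^ 2 ≤ δ ^ 2 * ∑ i, v i ^ 2 :=
  ((show (Φᵀ * Φ).IsSymm by simp [IsSymm, transpose_mul]).sub isSymm_one).sum_sq_mulVec_le hδ
    (abs_dotProduct_transpose_mul_self_sub_one_mulVec_le hΦ) v

theorem IsSymm.mulVec_inv_apply {R : Type*} [CommRing R] [DecidableEq ι] {A : Matrix ι ι R}
    (hA : A.IsSymm) (h : IsUnit A.det) (j : ι) : A *ᵥ A⁻¹ j = Pi.single j 1 := by
  rw [← vecMul_transpose, hA.eq, show A⁻¹ j = A⁻¹.row j from rfl, ← single_one_vecMul j A⁻¹,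
    vecMul_vecMul, nonsing_inv_mul A h, vecMul_one]

theorem sum_sq_le_of_mulVec_eq_single [DecidableEq ι] {A : Matrix ι ι ℝ} {c : ℝ} (hc : 0 < c)
    (hA : ∀ v, c * ∑ i, v i ^ 2 ≤ v ⬝ᵥ A *ᵥ v) {u : ι → ℝ} {j : ι}
    (hu : A *ᵥ u = Pi.single j 1) : ∑ i, u i ^ 2 ≤ 1 / c ^ 2 := by
  set U := ∑ i, u i ^ 2
  have hU : 0 ≤ U := by positivity
  have hcU : c * U ≤ u j := by simpa [hu] using hA u
  have huj : u j ^ 2 ≤ U := Finset.single_le_sum (fun i _ => sq_nonneg (u i)) (Finset.mem_univ j)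
  rw [le_div_iff₀ (by positivity)]
  rcases hU.eq_or_lt with h0 | hpos
  · simp [← h0]
  · nlinarith [mul_nonneg hc.le hU]

/-- The inverse of this matrix is the SBL posterior covariance `Σ̂`. -/
def sblPrecision [DecidableEq ι] (Φ : Matrix m ι ℝ) (β : ℝ) (α : ι → ℝ) : Matrix ι ι ℝ :=
  β • (Φᵀ * Φ) + diagonal α

section sblPrecision

variable [DecidableEq ι] {Φ : Matrix m ι ℝ} {β : ℝ} {α : ι → ℝ}

omit [Fintype ι] in
theorem isSymm_sblPrecision : (sblPrecision Φ β α).IsSymm := by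
  simp [sblPrecision, IsSymm, transpose_mul]

theorem posDef_sblPrecision (hβ : 0 ≤ β) (hα : ∀ i, 0 < α i) : (sblPrecision Φ β α).PosDef := by
  have hgram : (Φᵀ * Φ).PosSemidef := by simpa using posSemidef_conjTranspose_mul_self Φ
  exact PosDef.posSemidef_add (hgram.smul hβ) (PosDef.diagonal hα)

theorem le_dotProduct_sblPrecision_mulVec {c : ℝ} (hβ : 0 ≤ β) (hα : ∀ i, 0 ≤ α i)
    (hΦ : ∀ v : ι → ℝ, c * ∑ i, v i ^ 2 ≤ ∑ i, (Φ *ᵥ v) i ^ 2) (v : ι → ℝ) :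
    β * c * ∑ i, v i ^ 2 ≤ v ⬝ᵥ sblPrecision Φ β α *ᵥ v := by
  have hdiag : 0 ≤ v ⬝ᵥ diagonal α *ᵥ v := by
    simp only [dotProduct, mulVec_diagonal]
    exact Finset.sum_nonneg fun i _ => by nlinarith [hα i, mul_self_nonneg (v i)]
  rw [sblPrecision, add_mulVec, dotProduct_add, smul_mulVec, dotProduct_smul, smul_eq_mul,
    dotProduct_transpose_mul_self_mulVec, mul_assoc]
  nlinarith [mul_le_mul_of_nonneg_left (hΦ v) hβ]

theorem sq_le_sq_of_sblPrecision_mulVec_eq_zero {i : ι} (hβ : 0 < β) (hα : 0 ≤ α i) {u : ι → ℝ}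
    (hu : (sblPrecision Φ β α *ᵥ u) i = 0) : u i ^ 2 ≤ ((Φᵀ * Φ - 1) *ᵥ u) i ^ 2 := by
  set w := ((Φᵀ * Φ - 1) *ᵥ u) i
  have hrow : (β + α i) * u i = -(β * w) := by
    have : ((Φᵀ * Φ) *ᵥ u) i = w + u i := by simp [w, sub_mulVec]
    rw [sblPrecision, add_mulVec, Pi.add_apply, smul_mulVec, Pi.smul_apply, smul_eq_mul,
      mulVec_diagonal, this] at hu
    linarith
  have hpos : 0 < β + α i := by linarith
  have habs := congrArg abs hrow
  rw [abs_mul, abs_neg, abs_mul, abs_of_pos hpos, abs_of_pos hβ] at habs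
  refine sq_le_sq.mpr (le_of_mul_le_mul_left ?_ hpos)
  rw [habs]
  exact mul_le_mul_of_nonneg_right (by linarith) (abs_nonneg w)

theorem sum_erase_sq_le_of_sblPrecision_mulVec_eq_single (hβ : 0 < β) (hα : ∀ i, 0 ≤ α i)
    {u : ι → ℝ} {j : ι} (hu : sblPrecision Φ β α *ᵥ u = Pi.single j 1) :
    ∑ i ∈ Finset.univ.erase j, u i ^ 2 ≤ ∑ i, ((Φᵀ * Φ - 1) *ᵥ u) i ^ 2 :=
  calc ∑ i ∈ Finset.univ.erase j, u i ^ 2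
      ≤ ∑ i ∈ Finset.univ.erase j, ((Φᵀ * Φ - 1) *ᵥ u) i ^ 2 :=
        Finset.sum_le_sum fun i hi => sq_le_sq_of_sblPrecision_mulVec_eq_zero hβ (hα i) <| by
          rw [hu, Pi.single_eq_of_ne (Finset.ne_of_mem_erase hi)]
    _ ≤ ∑ i, ((Φᵀ * Φ - 1) *ᵥ u) i ^ 2 :=
        Finset.sum_le_sum_of_subset_of_nonneg (Finset.erase_subset _ _) fun _ _ _ => sq_nonneg _

end sblPrecision

end Matrix

theorem rip_diag_estimator_std_bound_general {N D d : ℕ}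
    (Φ : Matrix (Fin N) (Fin D) ℝ) (δ : ℝ) (hδ0 : 0 < δ) (hδ1 : δ < 1)
    (hRIP : ∀ C : Finset (Fin D), C.card = d → ∀ v : C → ℝ,
      (1 - δ) * (∑ j, (v j) ^ 2) ≤
          ∑ i, ((Φ.submatrix id (Subtype.val : C → Fin D)).mulVec v i) ^ 2 ∧
      ∑ i, ((Φ.submatrix id (Subtype.val : C → Fin D)).mulVec v i) ^ 2 ≤
          (1 + δ) * (∑ j, (v j) ^ 2))
    (S : Finset (Fin D)) (hS : S.card = d)
    (β : ℝ) (hβ : 0 < β) (α : S → ℝ) (hα : ∀ j, 0 < α j)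
    (K : ℕ)
    (Sig : Matrix S S ℝ)
    (hSig : Sig = (β • ((Φ.submatrix id (Subtype.val : S → Fin D))ᵀ *
      (Φ.submatrix id (Subtype.val : S → Fin D))) + Matrix.diagonal α)⁻¹) :
    ∀ j : S,
      Real.sqrt ((1 / (K : ℝ)) * ∑ j' ∈ Finset.univ.erase j, (Sig j j') ^ 2) ≤
        (1 / Real.sqrt K) * (δ / (β * (1 - δ))) := by
  intro j
  set ΦS := Φ.submatrix id (Subtype.val : S → Fin D)
  have hRIPS := hRIP S hS
  have hc : 0 < β * (1 - δ) := mul_pos hβ (by linarith)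
  have hrow : sblPrecision ΦS β α *ᵥ Sig j = Pi.single j 1 := by
    rw [hSig]
    exact isSymm_sblPrecision.mulVec_inv_apply
      ((posDef_sblPrecision hβ.le hα).det_pos.ne'.isUnit) j
  have hnorm : ∑ i, Sig j i ^ 2 ≤ 1 / (β * (1 - δ)) ^ 2 :=
    sum_sq_le_of_mulVec_eq_single hc
      (le_dotProduct_sblPrecision_mulVec hβ.le (fun i => (hα i).le) fun v => (hRIPS v).1) hrow
  have hoff : ∑ j' ∈ Finset.univ.erase j, Sig j j' ^ 2 ≤ (δ / (β * (1 - δ))) ^ 2 :=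
    calc ∑ j' ∈ Finset.univ.erase j, Sig j j' ^ 2
        ≤ ∑ i, ((ΦSᵀ * ΦS - 1) *ᵥ Sig j) i ^ 2 :=
          sum_erase_sq_le_of_sblPrecision_mulVec_eq_single hβ (fun i => (hα i).le) hrow
      _ ≤ δ ^ 2 * ∑ i, Sig j i ^ 2 :=
          sum_sq_transpose_mul_self_sub_one_mulVec_le hδ0.le hRIPS (Sig j)
      _ ≤ (δ / (β * (1 - δ))) ^ 2 := by
          rw [div_pow, div_eq_mul_one_div (δ ^ 2)]
          gcongr
  rw [Real.sqrt_mul (by positivity), Real.sqrt_div' 1 (Nat.cast_nonneg K), Real.sqrt_one]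
  gcongr
  exact (Real.sqrt_le_left (by positivity)).mpr hoff

/-- **Corollary 3: RIP bound on the limiting standard deviation of the diagonal
estimator.**  If `Φ` satisfies `(d, δ)`-RIP with `0 < δ < 1`, `S` has size `d`,
`β > 0`, `α̂` positive, and `Σ̂ = (β Φ_Sᵀ Φ_S + diag α̂)⁻¹`, then for each `j ∈ S`,
`√((1/K) ∑_{j'≠j} Σ̂_{j,j'}²) ≤ (1/√K) · δ / (β (1 - δ))`. -/
theorem rip_diag_estimator_std_bound {N D d : ℕ}
    (Φ : Matrix (Fin N) (Fin D) ℝ) (δ : ℝ) (hδ0 : 0 < δ) (hδ1 : δ < 1)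
    (hRIP : ∀ C : Finset (Fin D), C.card = d → ∀ v : C → ℝ,
      (1 - δ) * (∑ j, (v j) ^ 2) ≤
          ∑ i, ((Φ.submatrix id (Subtype.val : C → Fin D)).mulVec v i) ^ 2 ∧
      ∑ i, ((Φ.submatrix id (Subtype.val : C → Fin D)).mulVec v i) ^ 2 ≤
          (1 + δ) * (∑ j, (v j) ^ 2))
    (S : Finset (Fin D)) (hS : S.card = d)
    (β : ℝ) (hβ : 0 < β) (α : S → ℝ) (hα : ∀ j, 0 < α j)
    (K : ℕ) (hK : 0 < K)
    (Sig : Matrix S S ℝ)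
    (hSig : Sig = (β • ((Φ.submatrix id (Subtype.val : S → Fin D))ᵀ *
      (Φ.submatrix id (Subtype.val : S → Fin D))) + Matrix.diagonal α)⁻¹) :
    ∀ j : S,
      Real.sqrt ((1 / (K : ℝ)) * ∑ j' ∈ Finset.univ.erase j, (Sig j j') ^ 2) ≤
        (1 / Real.sqrt K) * (δ / (β * (1 - δ))) :=
  rip_diag_estimator_std_bound_general Φ δ hδ0 hδ1 hRIP S hS β hβ α hα K Sig hSig
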